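/- Fix a single frame I ⊆ Λ and consider the single-frame equation dμ^t(x)/dt = Σ_{y_I} ( φ_I(y_I, x_I) μ^t_I(x_I) μ^t(x_{Λ∖I}, y_I) − φ_I(x_I, y_I) μ^t_I(y_I) μ^t(x) ). Along any solution of this equation the marginal on I is constant in time: μ^t_I(a) = μ^0_I(a) for every restriction a to I and all t. -/

import Mathlib

open Finset

/-- Restriction of a word to a set of coordinates `M`. -/
def restrictW {Λ : Type*} (K : Λ → Type*) (M : Finset Λ) (x : ∀ i, K i) :
    ∀ i : M, K i := fun i => x i

/-- Marginal of `μ` on the set of coordinates `M`. -/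
def marginal {Λ : Type*} [Fintype Λ] [DecidableEq Λ] (K : Λ → Type*)
    [∀ i, Fintype (K i)] [∀ i, DecidableEq (K i)]
    (μ : (∀ i, K i) → ℝ) (M : Finset Λ) (a : ∀ i : M, K i) : ℝ :=
  ∑ x : ∀ i, K i, if restrictW K M x = a then μ x else 0

/-- One-dimensional marginal of `μ` at coordinate `i`. -/
def marg1 {Λ : Type*} [Fintype Λ] [DecidableEq Λ] (K : Λ → Type*)
    [∀ i, Fintype (K i)] [∀ i, DecidableEq (K i)]
    (μ : (∀ i, K i) → ℝ) (i : Λ) (a : K i) : ℝ :=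
  ∑ x : ∀ i, K i, if x i = a then μ x else 0

/-- `I`-recombination: the word equal to `a` on `I` and to `x` off `I`. -/
def recombW {Λ : Type*} [DecidableEq Λ] (K : Λ → Type*) (I : Finset Λ)
    (x : ∀ i, K i) (a : ∀ i : I, K i) : ∀ i, K i :=
  fun i => if h : i ∈ I then a ⟨i, h⟩ else x i

/-- Right hand side of the recombination equation. -/
def recombRHS {Λ : Type*} [Fintype Λ] [DecidableEq Λ] (K : Λ → Type*)
    [∀ i, Fintype (K i)] [∀ i, DecidableEq (K i)]
    (𝒥 : Finset (Finset Λ))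
    (φ : ∀ I : Finset Λ, (∀ i : I, K i) → (∀ i : I, K i) → ℝ)
    (μ : (∀ i, K i) → ℝ) (x : ∀ i, K i) : ℝ :=
  ∑ I ∈ 𝒥, ∑ y : ∀ i : I, K i,
    (φ I y (restrictW K I x) * marginal K μ I (restrictW K I x) * μ (recombW K I x y)
      - φ I (restrictW K I x) y * marginal K μ I y * μ x)

/-- A probability mass function on `∀ i, K i`. -/
def IsPMF {Λ : Type*} [Fintype Λ] [DecidableEq Λ] (K : Λ → Type*) [∀ i, Fintype (K i)]
    (μ : (∀ i, K i) → ℝ) : Prop :=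
  (∀ x, 0 ≤ μ x) ∧ ∑ x : ∀ i, K i, μ x = 1

/-- `𝒥`-separated measure. -/
def IsSeparated {Λ : Type*} [Fintype Λ] [DecidableEq Λ] (K : Λ → Type*)
    [∀ i, Fintype (K i)] [∀ i, DecidableEq (K i)]
    (𝒥 : Finset (Finset Λ)) (μ : (∀ i, K i) → ℝ) : Prop :=
  ∀ I ∈ 𝒥, ∀ x, μ x = marginal K μ I (restrictW K I x) * marginal K μ Iᶜ (restrictW K Iᶜ x)

/-- A `T₀`-system of frames. -/
def IsT0 {Λ : Type*} (𝒥 : Finset (Finset Λ)) : Prop :=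
  ∀ i j : Λ, i ≠ j → ∃ I ∈ 𝒥, (i ∈ I ∧ j ∉ I) ∨ (j ∈ I ∧ i ∉ I)

/-- Right hand side of the single-frame recombination equation. -/
def recombRHS1 {Λ : Type*} [Fintype Λ] [DecidableEq Λ] (K : Λ → Type*)
    [∀ i, Fintype (K i)] [∀ i, DecidableEq (K i)]
    (I : Finset Λ)
    (φ : (∀ i : I, K i) → (∀ i : I, K i) → ℝ)
    (μ : (∀ i, K i) → ℝ) (x : ∀ i, K i) : ℝ :=
  ∑ y : ∀ i : I, K i,
    (φ y (restrictW K I x) * marginal K μ I (restrictW K I x) * μ (recombW K I x y)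
      - φ (restrictW K I x) y * marginal K μ I y * μ x)

/-!
The `I`-marginal is linear in `μ`, so along a solution it moves with the `I`-marginal of the
right-hand side. Summed over the fibre `x_I = a`, the gain term for a fixed `b` becomes
`φ(b, a) μ_I(a) μ_I(b)` (overwriting `x_I` by `b` is a bijection between fibres) and the loss
term `φ(a, b) μ_I(b) μ_I(a)`; they cancel by the symmetry of `φ`.
-/

section Recombination

variable {Λ : Type*} [Fintype Λ] [DecidableEq Λ] {K : Λ → Type*}
  [∀ i, Fintype (K i)] [∀ i, DecidableEq (K i)] {I : Finset Λ}

omit [Fintype Λ] [∀ i, Fintype (K i)] [∀ i, DecidableEq (K i)] in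
@[simp]
theorem restrictW_recombW (x : ∀ i, K i) (a : ∀ i : I, K i) :
    restrictW K I (recombW K I x a) = a := by
  funext i
  simp [restrictW, recombW, i.2]

omit [Fintype Λ] [∀ i, Fintype (K i)] [∀ i, DecidableEq (K i)] in
@[simp]
theorem recombW_recombW (x : ∀ i, K i) (a b : ∀ i : I, K i) :
    recombW K I (recombW K I x a) b = recombW K I x b := by
  funext i
  by_cases h : i ∈ I <;> simp [recombW, h]

omit [Fintype Λ] [∀ i, Fintype (K i)] [∀ i, DecidableEq (K i)] in
@[simp]
theorem recombW_restrictW (x : ∀ i, K i) : recombW K I x (restrictW K I x) = x := by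
  funext i
  by_cases h : i ∈ I <;> simp [recombW, restrictW, h]

theorem marginal_eq_sum_fiber (μ : (∀ i, K i) → ℝ) (M : Finset Λ) (a : ∀ i : M, K i) :
    marginal K μ M a = ∑ x with restrictW K M x = a, μ x := by
  rw [marginal, Finset.sum_filter]

theorem sum_fiber_comp_recombW (μ : (∀ i, K i) → ℝ) (a b : ∀ i : I, K i) :
    ∑ x with restrictW K I x = a, μ (recombW K I x b) = marginal K μ I b := by
  rw [marginal_eq_sum_fiber]
  refine Finset.sum_nbij' (fun x => recombW K I x b) (fun z => recombW K I z a) ?_ ?_ ?_ ?_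
    (fun _ _ => rfl)
  · simp
  · simp
  · intro x hx
    simp [← (Finset.mem_filter.mp hx).2]
  · intro z hz
    simp [← (Finset.mem_filter.mp hz).2]

theorem marginal_recombRHS1 {φ : (∀ i : I, K i) → (∀ i : I, K i) → ℝ}
    (hφ : ∀ a b, φ a b = φ b a) (μ : (∀ i, K i) → ℝ) (a : ∀ i : I, K i) :
    marginal K (recombRHS1 K I φ μ) I a = 0 := by
  rw [marginal_eq_sum_fiber]
  calc ∑ x with restrictW K I x = a, recombRHS1 K I φ μ x
      = ∑ x with restrictW K I x = a, ∑ b : ∀ i : I, K i,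
          (φ b a * marginal K μ I a * μ (recombW K I x b) - φ a b * marginal K μ I b * μ x) :=
        Finset.sum_congr rfl fun x hx => by
          rw [recombRHS1, (Finset.mem_filter.mp hx).2]
    _ = ∑ b : ∀ i : I, K i,
          (φ b a * marginal K μ I a * marginal K μ I b
            - φ a b * marginal K μ I b * marginal K μ I a) := by
        rw [Finset.sum_comm]
        refine Finset.sum_congr rfl fun b _ => ?_
        rw [Finset.sum_sub_distrib, ← Finset.mul_sum, ← Finset.mul_sum,
          sum_fiber_comp_recombW, ← marginal_eq_sum_fiber]
    _ = 0 := Finset.sum_eq_zero fun b _ => by rw [hφ]; ring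

theorem hasDerivAt_marginal {μ : ℝ → (∀ i, K i) → ℝ} {μ' : (∀ i, K i) → ℝ} {t : ℝ}
    (hμ : ∀ x, HasDerivAt (fun s => μ s x) (μ' x) t) (M : Finset Λ) (a : ∀ i : M, K i) :
    HasDerivAt (fun s => marginal K (μ s) M a) (marginal K μ' M a) t := by
  simp only [marginal_eq_sum_fiber]
  exact HasDerivAt.fun_sum fun x _ => hμ x

end Recombination

theorem marginal_constant_single_frame_general {Λ : Type*} [Fintype Λ] [DecidableEq Λ]
    (K : Λ → Type*) [∀ i, Fintype (K i)] [∀ i, DecidableEq (K i)]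
    (I : Finset Λ)
    (φ : (∀ i : I, K i) → (∀ i : I, K i) → ℝ)
    (hφsymm : ∀ a b, φ a b = φ b a)
    (μ : ℝ → (∀ i, K i) → ℝ)
    (hsol : ∀ x t, HasDerivAt (fun s => μ s x) (recombRHS1 K I φ (μ t) x) t) :
    ∀ a : (∀ i : I, K i), ∀ t : ℝ, marginal K (μ t) I a = marginal K (μ 0) I a := by
  intro a t
  have hderiv : ∀ s, HasDerivAt (fun u => marginal K (μ u) I a) 0 s := fun s => by
    simpa only [marginal_recombRHS1 hφsymm] using hasDerivAt_marginal (fun x => hsol x s) I a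
  exact is_const_of_deriv_eq_zero (fun s => (hderiv s).differentiableAt)
    (fun s => (hderiv s).deriv) t 0

/-- along any solution of the single-frame recombination equation, the marginal
on the frame `I` is constant in time. -/
theorem marginal_constant_single_frame {Λ : Type*} [Fintype Λ] [DecidableEq Λ] [Nonempty Λ]
    (K : Λ → Type*) [∀ i, Fintype (K i)] [∀ i, DecidableEq (K i)] [∀ i, Nonempty (K i)]
    (I : Finset Λ)
    (φ : (∀ i : I, K i) → (∀ i : I, K i) → ℝ)
    (hφpos : ∀ a b, 0 < φ a b)
    (hφsymm : ∀ a b, φ a b = φ b a)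
    (μ : ℝ → (∀ i, K i) → ℝ)
    (hsol : ∀ x t, HasDerivAt (fun s => μ s x) (recombRHS1 K I φ (μ t) x) t) :
    ∀ a : (∀ i : I, K i), ∀ t : ℝ, marginal K (μ t) I a = marginal K (μ 0) I a :=
  marginal_constant_single_frame_general K I φ hφsymm μ hsol
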